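/- Under the hypotheses of the previous periodicity identity, if additionally Φ(Z) := dξ_H/dZ ≠ 0 and ∂ẑ_e/∂ξ(·, Z) is continuous, periodic and attains both positive and negative values on a period, then there exist ξ > l with Ĵ(ξ, Z) ≤ 0; i.e., wave-breaking eventually occurs for the Z-layer. -/
import Mathlib


/-- If `Φ(Z) = dξ_H/dZ ≠ 0` and `∂ẑ_e/∂ξ(·,Z)` is continuous, periodic and attains
both signs, then the Jacobian eventually becomes nonpositive: wave-breaking
occurs for the `Z` layer. -/
theorem wavebreaking_inevitable (l Z : ℝ) (ξH Φ : ℝ → ℝ)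
    (hΦ : Φ Z ≠ 0) (hξH : 0 < ξH Z)
    (J Δ' : ℝ → ℝ → ℝ)
    (hcont : Continuous (fun ξ => Δ' ξ Z))
    (hper : Function.Periodic (fun ξ => Δ' ξ Z) (ξH Z))
    (hposd : ∃ ξ ≥ l, 0 < Δ' ξ Z) (hnegd : ∃ ξ ≥ l, Δ' ξ Z < 0)
    (hid : ∀ (n : ℕ), ∀ ξ ≥ l, J (ξ + n * ξH Z) Z = J ξ Z - n * Δ' ξ Z * Φ Z) :
    ∃ ξ > l, J ξ Z ≤ 0 := by
  -- pick ξ₀ ≥ l with Δ' ξ₀ Z * Φ Z > 0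
  obtain ⟨ξ₀, hξ₀l, hc⟩ : ∃ ξ₀ ≥ l, 0 < Δ' ξ₀ Z * Φ Z := by
    rcases lt_or_gt_of_ne hΦ with hneg | hpos
    · obtain ⟨ξ₀, h1, h2⟩ := hnegd
      exact ⟨ξ₀, h1, mul_pos_of_neg_of_neg h2 hneg⟩
    · obtain ⟨ξ₀, h1, h2⟩ := hposd
      exact ⟨ξ₀, h1, mul_pos h2 hpos⟩
  set c := Δ' ξ₀ Z * Φ Z with hcdef
  obtain ⟨n, hn⟩ := exists_nat_gt (max 1 (J ξ₀ Z / c))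
  refine ⟨ξ₀ + n * ξH Z, ?_, ?_⟩
  · have h1 : (1 : ℝ) ≤ n := le_of_lt (lt_of_le_of_lt (le_max_left _ _) hn)
    nlinarith [hξH]
  · rw [hid n ξ₀ hξ₀l]
    have hdiv : J ξ₀ Z / c < n := lt_of_le_of_lt (le_max_right _ _) hn
    have : J ξ₀ Z < n * c := (div_lt_iff₀ hc).mp hdiv
    nlinarith
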